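/- Let r ≥ 1, let k ∈ {0, 1, …, r−1}, and let u_1, …, u_r, a_1, …, a_k ∈ Θ be homogeneous polynomials of degree N with u_1, …, u_r pairwise distinct. Then, with denominators cleared, (∏_{1 ≤ p < q ≤ r} (u_q − u_p)) · E(a_1⋯a_k · ∏_{i=1}^r (1 − u_i)^{-1}) = a_1⋯a_k · Σ_{i=1}^r (−1)^{r−i} · u_i^{r−k−1} · exp(q·u_i) · ∏_{1 ≤ p < q ≤ r, p ≠ i, q ≠ i} (u_q − u_p), where exp(q·u) denotes Σ_{j ≥ 0} (q^j / j!) · u^j. -/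

import Mathlib

variable {σ : Type*}

/-- Total degree of a monomial. -/
def monDeg (d : σ →₀ ℕ) : ℕ := d.sum fun _ n => n

/-- `Θ`: series whose coefficients vanish in degrees not divisible by `N`. -/
def InTheta (N : ℕ) (f : MvPowerSeries σ ℚ) : Prop :=
  ∀ d : σ →₀ ℕ, ¬ (N ∣ monDeg d) → MvPowerSeries.coeff (R := ℚ) d f = 0

/-- `f^(k)`: homogeneous component of total degree `N * k`. -/
noncomputable def homComp (N : ℕ) (f : MvPowerSeries σ ℚ) (k : ℕ) : MvPowerSeries σ ℚ :=
  fun d => if monDeg d = N * k then MvPowerSeries.coeff (R := ℚ) d f else 0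

/-- The operation `⊙`: `f ⊙ g = Σ_{k,ℓ} C(k+ℓ,k) f^(k) g^(ℓ)`, defined coefficientwise
(at a monomial of total degree `m`, only indices `k, ℓ ≤ m` can contribute, for `N ≥ 1`). -/
noncomputable def odot (N : ℕ) (f g : MvPowerSeries σ ℚ) : MvPowerSeries σ ℚ :=
  fun d => ∑ k ∈ Finset.range (monDeg d + 1), ∑ l ∈ Finset.range (monDeg d + 1),
    ((k + l).choose k : ℚ) * MvPowerSeries.coeff (R := ℚ) d (homComp N f k * homComp N g l)

/-- The `E`-transform: `E f = Σ_k (q^k / k!) f^(k)`. -/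
noncomputable def Etrans (N : ℕ) (f : MvPowerSeries σ ℚ) :
    PowerSeries (MvPowerSeries σ ℚ) :=
  PowerSeries.mk fun k => (k.factorial : ℚ)⁻¹ • homComp N f k

/-- `exp(q·u) = Σ_k (q^k / k!) u^k`. -/
noncomputable def expQ (u : MvPowerSeries σ ℚ) : PowerSeries (MvPowerSeries σ ℚ) :=
  PowerSeries.mk fun k => (k.factorial : ℚ)⁻¹ • u ^ k

/-- A homogeneous polynomial of degree `N`: finitely many nonzero coefficients,
all in total degree exactly `N`. -/
def IsHomogDeg (N : ℕ) (a : MvPowerSeries σ ℚ) : Prop :=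
  {d : σ →₀ ℕ | MvPowerSeries.coeff (R := ℚ) d a ≠ 0}.Finite ∧
    ∀ d : σ →₀ ℕ, MvPowerSeries.coeff (R := ℚ) d a ≠ 0 → monDeg d = N

/-- Iterated `⊙`-product of a nonempty list. -/
noncomputable def odotList (N : ℕ) : List (MvPowerSeries σ ℚ) → MvPowerSeries σ ℚ
  | [] => 1
  | [f] => f
  | f :: g :: rest => odot N f (odotList N (g :: rest))

/-!
Write `A = a_1⋯a_k`, `G = ∏ (1 - u_i)⁻¹`, `V` for the Vandermonde product and
`alt(s) = ∑_i (-1)^(n-i) V_i u_i^s` (`r = n + 1`) for the Vandermonde determinant whose last row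
`u_i^n` is replaced by `u_i^s`. Since `A` is homogeneous of degree `N k`, comparing coefficients of
`q^m` reduces the theorem to `alt(s) = V · G^(s-n)` (read as `0` for `s < n`).
Both sides satisfy the linear recurrence with characteristic polynomial `∏ (X - u_i)`: the left
side is a combination of the geometric sequences `u_i^s`, and for the right side the recurrence
is the homogeneous part of degree `N (t + 1)` of `∏ (1 - u_i) · G = 1`. They agree for `s ≤ n`,
because `alt(s)` has two equal rows for `s < n` and `alt(n) = V`, hence everywhere.
-/

open Finset

theorem Polynomial.natDegree_prod_X_sub_C_le {R ι : Type*} [CommRing R] (s : Finset ι)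
    (f : ι → R) : (∏ j ∈ s, (Polynomial.X - Polynomial.C (f j))).natDegree ≤ #s := by
  simpa using (Polynomial.natDegree_prod_le s _).trans
    (sum_le_card_nsmul s _ 1 fun j _ => Polynomial.natDegree_X_sub_C_le (f j))

namespace LinearRecurrence

open Polynomial

variable {R : Type*} [CommRing R]

/-- For monic `P`, the linear recurrence with characteristic polynomial `P`. -/
noncomputable def ofMonic (P : R[X]) : LinearRecurrence R :=
  ⟨P.natDegree, fun i => -P.coeff i⟩

theorem isSolution_ofMonic_iff {P : R[X]} (hP : P.Monic) {c : ℕ → R} :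
    (ofMonic P).IsSolution c ↔
      ∀ t, ∑ i ∈ range (P.natDegree + 1), P.coeff i * c (t + i) = 0 := by
  refine forall_congr' fun t => ?_
  change c (t + P.natDegree) = ∑ i : Fin P.natDegree, -P.coeff i * c (t + i) ↔ _
  rw [sum_range_succ, hP.coeff_natDegree, one_mul,
    Fin.sum_univ_eq_sum_range (fun i => -P.coeff i * c (t + i))]
  simp only [neg_mul, sum_neg_distrib]
  constructor <;> intro h <;> linear_combination h

theorem isSolution_ofMonic_sum_mul_pow {P : R[X]} (hP : P.Monic) {ι : Type*} (s : Finset ι)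
    (c x : ι → R) (hx : ∀ l ∈ s, P.IsRoot (x l)) :
    (ofMonic P).IsSolution fun m => ∑ l ∈ s, c l * x l ^ m := by
  rw [isSolution_ofMonic_iff hP]
  intro t
  simp_rw [mul_sum]
  rw [sum_comm]
  refine sum_eq_zero fun l hl => ?_
  calc ∑ i ∈ range (P.natDegree + 1), P.coeff i * (c l * x l ^ (t + i))
      = c l * x l ^ t * P.eval (x l) := by
        rw [eval_eq_sum_range, mul_sum]
        exact sum_congr rfl fun i _ => by ring
    _ = 0 := by rw [(hx l hl).eq_zero, mul_zero]

end LinearRecurrence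

theorem prod_filter_lt_eq_prod_Ioi {M : Type*} [CommMonoid M] {n : ℕ}
    (f : Fin n → Fin n → M) :
    ∏ p ∈ univ.filter (fun p : Fin n × Fin n => p.1 < p.2), f p.1 p.2 =
      ∏ i, ∏ j ∈ Ioi i, f i j := by
  rw [prod_filter, ← univ_product_univ, prod_product]
  simp_rw [← prod_filter, filter_lt_eq_Ioi]

theorem prod_filter_lt_ne_eq_prod_succAbove {M : Type*} [CommMonoid M] {n : ℕ}
    (i : Fin (n + 1)) (f : Fin (n + 1) → Fin (n + 1) → M) :
    ∏ p ∈ univ.filter (fun p : Fin (n + 1) × Fin (n + 1) => p.1 < p.2 ∧ p.1 ≠ i ∧ p.2 ≠ i),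
        f p.1 p.2 =
      ∏ p ∈ univ.filter (fun p : Fin n × Fin n => p.1 < p.2),
        f (i.succAbove p.1) (i.succAbove p.2) := by
  symm
  refine prod_nbij (fun p => (i.succAbove p.1, i.succAbove p.2)) ?_ ?_ ?_ fun _ _ => rfl
  · intro p hp
    simp only [mem_filter, mem_univ, true_and] at hp ⊢
    exact ⟨Fin.succAbove_lt_succAbove_iff.2 hp, i.succAbove_ne _, i.succAbove_ne _⟩
  · intro p _ q _ h
    simp only [Prod.mk.injEq, Fin.succAbove_right_inj] at h
    exact Prod.ext h.1 h.2
  · rintro ⟨a, b⟩ hp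
    simp only [coe_filter, mem_univ, true_and, Set.mem_ofPred_eq] at hp
    obtain ⟨hab, ha, hb⟩ := hp
    obtain ⟨x, rfl⟩ := Fin.exists_succAbove_eq ha
    obtain ⟨y, rfl⟩ := Fin.exists_succAbove_eq hb
    exact ⟨(x, y), by simpa using Fin.succAbove_lt_succAbove_iff.1 hab, rfl⟩

section Alternant

open Matrix Polynomial

variable {R : Type*} [CommRing R] {n : ℕ} (u : Fin (n + 1) → R)

noncomputable def alternant (s : ℕ) : R :=
  ∑ i : Fin (n + 1), ((-1) ^ (n - (i : ℕ)) *
    ∏ p ∈ univ.filter (fun p : Fin (n + 1) × Fin (n + 1) => p.1 < p.2 ∧ p.1 ≠ i ∧ p.2 ≠ i),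
      (u p.2 - u p.1)) * u i ^ s

theorem alternant_eq_det (s : ℕ) :
    alternant u s = ((vandermonde u)ᵀ.updateRow (Fin.last n) fun i => u i ^ s).det := by
  rw [det_succ_row _ (Fin.last n), alternant]
  refine sum_congr rfl fun i _ => ?_
  have hminor : ((vandermonde u)ᵀ.updateRow (Fin.last n) fun i => u i ^ s).submatrix
      (Fin.last n).succAbove i.succAbove = (vandermonde (u ∘ i.succAbove))ᵀ := by
    ext j l
    simp [Fin.succAbove_last, vandermonde_apply, (Fin.castSucc_lt_last j).ne]
  have hsign : (-1 : R) ^ (n + (i : ℕ)) = (-1) ^ (n - i) := by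
    rw [show n + (i : ℕ) = n - i + 2 * i by omega, pow_add, pow_mul, neg_one_sq, one_pow,
      mul_one]
  rw [hminor, det_transpose, det_vandermonde,
    prod_filter_lt_ne_eq_prod_succAbove i (fun a b => u b - u a),
    prod_filter_lt_eq_prod_Ioi (fun a b => u (i.succAbove b) - u (i.succAbove a)),
    updateRow_self, Fin.val_last, hsign]
  simp only [Function.comp_apply]
  ring

theorem alternant_of_lt {s : ℕ} (hs : s < n) : alternant u s = 0 := by
  have hs' : (⟨s, by omega⟩ : Fin (n + 1)) ≠ Fin.last n := Fin.ne_of_val_ne (by simp; omega)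
  rw [alternant_eq_det]
  refine det_zero_of_row_eq hs' (funext fun i => ?_)
  simp [updateRow_ne hs', vandermonde_apply]

theorem alternant_self :
    alternant u n =
      ∏ p ∈ univ.filter (fun p : Fin (n + 1) × Fin (n + 1) => p.1 < p.2), (u p.2 - u p.1) := by
  have hrow : (fun i => u i ^ n) = (vandermonde u)ᵀ (Fin.last n) := by
    ext i
    simp [vandermonde_apply]
  rw [alternant_eq_det, hrow, updateRow_eq_self, det_transpose, det_vandermonde,
    prod_filter_lt_eq_prod_Ioi (fun a b => u b - u a)]

theorem alternant_eq_mul_of_isSolution {c : ℕ → R}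
    (hc : (LinearRecurrence.ofMonic (∏ j, (X - C (u j)))).IsSolution c)
    (hc_lt : ∀ s < n, c s = 0) (hc_n : c n = 1) (s : ℕ) :
    alternant u s =
      (∏ p ∈ univ.filter (fun p : Fin (n + 1) × Fin (n + 1) => p.1 < p.2), (u p.2 - u p.1)) *
        c s := by
  nontriviality R
  set E := LinearRecurrence.ofMonic (∏ j, (X - C (u j)))
  have hP : (∏ j, (X - C (u j))).Monic := monic_prod_of_monic _ _ fun j _ => monic_X_sub_C _
  have halt : E.IsSolution (alternant u) :=
    LinearRecurrence.isSolution_ofMonic_sum_mul_pow hP univ _ u fun l _ => by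
      simp [eval_prod, prod_eq_zero (mem_univ l)]
  have hVc := E.solSpace.smul_mem
    (∏ p ∈ univ.filter (fun p : Fin (n + 1) × Fin (n + 1) => p.1 < p.2), (u p.2 - u p.1)) hc
  have horder : E.order = n + 1 := by
    change (∏ j, (X - C (u j))).natDegree = n + 1
    rw [natDegree_finsetProd_X_sub_C_eq_card, card_univ, Fintype.card_fin]
  refine congrFun ((E.eq_iff_eqOn_range_order _ _ halt hVc).2 fun m hm => ?_) s
  rw [horder, coe_range, Set.mem_Iio] at hm
  rcases (Nat.lt_succ_iff.1 hm).lt_or_eq with hm | rfl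
  · simp [alternant_of_lt u hm, hc_lt m hm]
  · simp [alternant_self, hc_n]

end Alternant

namespace MvPowerSeries

variable {R : Type*}

section Semiring

variable [Semiring R] {f : MvPowerSeries σ R} {p : ℕ}

theorem isHomogeneous_iff_coeff_eq_zero :
    f.IsHomogeneous p ↔ ∀ d, Finsupp.degree d ≠ p → coeff d f = 0 := by
  refine ⟨fun hf _ hd => hf.coeff_eq_zero hd, fun h d hd => ?_⟩
  change Finsupp.weight (fun _ => 1) d = p
  rw [← Finsupp.degree_eq_weight_one]
  exact not_imp_comm.1 (h d) hd

theorem isHomogeneous_zero (p : ℕ) : (0 : MvPowerSeries σ R).IsHomogeneous p :=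
  isHomogeneous_iff_coeff_eq_zero.2 fun _ _ => map_zero _

theorem isHomogeneous_one : (1 : MvPowerSeries σ R).IsHomogeneous 0 := by
  classical
  refine isHomogeneous_iff_coeff_eq_zero.2 fun d hd => ?_
  rw [coeff_one, if_neg (by rintro rfl; exact hd (map_zero _))]

theorem IsHomogeneous.constantCoeff_eq_zero (hf : f.IsHomogeneous p) (hp : p ≠ 0) :
    constantCoeff f = 0 := by
  rw [← coeff_zero_eq_constantCoeff_apply]
  exact hf.coeff_eq_zero (by rw [map_zero]; exact hp.symm)

theorem IsHomogeneous.homogeneousComponent_of_ne (hf : f.IsHomogeneous p) {q : ℕ}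
    (hq : q ≠ p) : homogeneousComponent q f = 0 := by
  ext d
  rw [coeff_homogeneousComponent, map_zero]
  split_ifs with hd
  · exact hf.coeff_eq_zero (hd ▸ hq)
  · rfl

theorem homogeneousComponent_zero (f : MvPowerSeries σ R) :
    homogeneousComponent 0 f = C (constantCoeff f) := by
  classical
  ext d
  rw [coeff_homogeneousComponent, coeff_C]
  by_cases hd : d = 0
  · simp [hd]
  · simp [hd, (Finsupp.degree_eq_zero_iff d).not.2 hd]

theorem IsHomogeneous.homogeneousComponent_mul (hf : f.IsHomogeneous p)
    (g : MvPowerSeries σ R) (q : ℕ) :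
    homogeneousComponent q (f * g) =
      if p ≤ q then f * homogeneousComponent (q - p) g else 0 := by
  classical
  ext d
  have hdeg {x : (σ →₀ ℕ) × (σ →₀ ℕ)} (hx : x.1 + x.2 = d) (hx1 : coeff x.1 f ≠ 0) :
      Finsupp.degree d = p + Finsupp.degree x.2 := by
    rw [← hx, map_add, not_imp_comm.1 hf.coeff_eq_zero hx1]
  rw [coeff_homogeneousComponent]
  split_ifs with hd hpq hpq
  · rw [coeff_mul, coeff_mul]
    refine sum_congr rfl fun x hx => ?_
    rw [coeff_homogeneousComponent]
    by_cases hx1 : coeff x.1 f = 0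
    · simp [hx1]
    · rw [if_pos (by have := hdeg (mem_antidiagonal.1 hx) hx1; omega)]
  · rw [coeff_mul, map_zero]
    refine sum_eq_zero fun x hx => ?_
    by_cases hx1 : coeff x.1 f = 0
    · rw [hx1, zero_mul]
    · have := hdeg (mem_antidiagonal.1 hx) hx1
      omega
  · rw [← Nat.add_sub_cancel' hpq] at hd
    exact (IsHomogeneous.coeff_eq_zero
      (hf.mul (isHomogeneous_homogeneousComponent g (q - p))) hd).symm
  · rw [map_zero]

theorem IsHomogeneous.homogeneousComponent_mul_mul {N : ℕ} (hN : 0 < N)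
    (hf : f.IsHomogeneous (N * p)) (g : MvPowerSeries σ R) (q : ℕ) :
    homogeneousComponent (N * q) (f * g) =
      if p ≤ q then f * homogeneousComponent (N * (q - p)) g else 0 := by
  simp only [hf.homogeneousComponent_mul, Nat.mul_le_mul_left_iff hN, Nat.mul_sub_left_distrib]

end Semiring

theorem IsHomogeneous.prod [CommSemiring R] {ι : Type*} (s : Finset ι)
    {f : ι → MvPowerSeries σ R} {p : ι → ℕ} (hf : ∀ i ∈ s, (f i).IsHomogeneous (p i)) :
    (∏ i ∈ s, f i).IsHomogeneous (∑ i ∈ s, p i) := by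
  classical
  induction s using Finset.induction_on with
  | empty => exact isHomogeneous_one
  | insert a s ha ih =>
    rw [prod_insert ha, sum_insert ha]
    exact IsHomogeneous.mul (hf a (mem_insert_self a s))
      (ih fun i hi => hf i (mem_insert_of_mem hi))

section Ring

variable [Ring R] {f g : MvPowerSeries σ R} {p : ℕ}

theorem IsHomogeneous.neg (hf : f.IsHomogeneous p) : (-f).IsHomogeneous p :=
  isHomogeneous_iff_coeff_eq_zero.2 fun d hd => by rw [map_neg, hf.coeff_eq_zero hd, neg_zero]

theorem IsHomogeneous.sub (hf : f.IsHomogeneous p) (hg : g.IsHomogeneous p) :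
    (f - g).IsHomogeneous p := by
  rw [sub_eq_add_neg]
  exact hf.add hg.neg

end Ring

theorem isHomogeneous_coeff_prod_X_sub_C [CommRing R] {ι : Type*} (s : Finset ι)
    {f : ι → MvPowerSeries σ R} {N : ℕ} (hf : ∀ i ∈ s, (f i).IsHomogeneous N) (i : ℕ) :
    ((∏ j ∈ s, (Polynomial.X - Polynomial.C (f j))).coeff i).IsHomogeneous (N * (#s - i)) := by
  classical
  induction s using Finset.induction_on generalizing i with
  | empty =>
    rw [prod_empty, Polynomial.coeff_one]
    split_ifs with hi
    · rw [hi, card_empty, Nat.sub_zero, mul_zero]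
      exact isHomogeneous_one
    · exact isHomogeneous_zero _
  | insert a s ha ih =>
    replace ih := ih fun j hj => hf j (mem_insert_of_mem hj)
    have hfa : (f a).IsHomogeneous N := hf a (mem_insert_self a s)
    rw [prod_insert ha, sub_mul, Polynomial.coeff_sub, Polynomial.coeff_C_mul,
      card_insert_of_notMem ha]
    rcases i with _ | i
    · rw [Polynomial.coeff_X_mul_zero, zero_sub,
        show N * (#s + 1 - 0) = N + N * (#s - 0) by rw [Nat.sub_zero, Nat.sub_zero]; ring]
      apply IsHomogeneous.neg
      apply IsHomogeneous.mul hfa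
      exact ih 0
    · rw [Polynomial.coeff_X_mul, Nat.add_sub_add_right]
      apply IsHomogeneous.sub (ih i)
      by_cases hi : i + 1 ≤ #s
      · rw [show #s - i = 1 + (#s - (i + 1)) by omega, mul_add, mul_one]
        exact IsHomogeneous.mul hfa (ih (i + 1))
      · have hdeg := Polynomial.natDegree_prod_X_sub_C_le s f
        rw [Polynomial.coeff_eq_zero_of_natDegree_lt (by omega), mul_zero]
        exact isHomogeneous_zero _

end MvPowerSeries

section HomogeneousComponents

open MvPowerSeries

variable {R : Type*} [CommRing R] {N n : ℕ} {u : Fin (n + 1) → MvPowerSeries σ R}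
  {F : MvPowerSeries σ R}

theorem isSolution_homogeneousComponent (hN : 0 < N) (hu : ∀ j, (u j).IsHomogeneous N)
    (hF : (∏ j, (1 - u j)) * F = 1) :
    (LinearRecurrence.ofMonic (∏ j, (Polynomial.X - Polynomial.C (u j)))).IsSolution
      fun s => if n ≤ s then homogeneousComponent (N * (s - n)) F else 0 := by
  set P := ∏ j, (Polynomial.X - Polynomial.C (u j))
  have hP : P.Monic := Polynomial.monic_prod_of_monic _ _ fun j _ => Polynomial.monic_X_sub_C _
  have hdeg : P.natDegree ≤ n + 1 := by
    simpa using Polynomial.natDegree_prod_X_sub_C_le univ u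
  have hP1 : ∏ j, (1 - u j) = ∑ i ∈ range (P.natDegree + 1), P.coeff i := by
    simpa [P, Polynomial.eval_prod] using Polynomial.eval_eq_sum_range (p := P) 1
  rw [LinearRecurrence.isSolution_ofMonic_iff hP]
  intro t
  have hterm : ∀ i ∈ range (P.natDegree + 1),
      P.coeff i * (if n ≤ t + i then homogeneousComponent (N * (t + i - n)) F else 0) =
        homogeneousComponent (N * (t + 1)) (P.coeff i * F) := by
    intro i hi
    have hi : i ≤ n + 1 := by rw [mem_range] at hi; omega
    have hPi : (P.coeff i).IsHomogeneous (N * (#univ - i)) :=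
      isHomogeneous_coeff_prod_X_sub_C univ (fun j _ => hu j) i
    rw [card_univ, Fintype.card_fin] at hPi
    rw [hPi.homogeneousComponent_mul_mul hN]
    by_cases h : n ≤ t + i
    · rw [if_pos h, if_pos (by omega), show t + 1 - (n + 1 - i) = t + i - n by omega]
    · rw [if_neg h, if_neg (by omega), mul_zero]
  calc _ = ∑ i ∈ range (P.natDegree + 1), homogeneousComponent (N * (t + 1)) (P.coeff i * F) :=
        sum_congr rfl hterm
    _ = homogeneousComponent (N * (t + 1)) ((∏ j, (1 - u j)) * F) := by
        rw [hP1, sum_mul, map_sum]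
    _ = 0 := by
        rw [hF]
        exact isHomogeneous_one.homogeneousComponent_of_ne (by positivity)

theorem alternant_eq_mul_homogeneousComponent (hN : 0 < N) (hu : ∀ j, (u j).IsHomogeneous N)
    (hF : (∏ j, (1 - u j)) * F = 1) (s : ℕ) :
    alternant u s =
      (∏ p ∈ univ.filter (fun p : Fin (n + 1) × Fin (n + 1) => p.1 < p.2), (u p.2 - u p.1)) *
        if n ≤ s then homogeneousComponent (N * (s - n)) F else 0 := by
  have hF0 : constantCoeff F = 1 := by
    have hu0 (j) : constantCoeff (u j) = 0 := IsHomogeneous.constantCoeff_eq_zero (hu j) hN.ne'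
    simpa [hu0] using congrArg constantCoeff hF
  refine alternant_eq_mul_of_isSolution u (isSolution_homogeneousComponent hN hu hF)
    (fun s hs => if_neg (by omega)) ?_ s
  rw [if_pos le_rfl, Nat.sub_self, mul_zero, homogeneousComponent_zero, hF0, map_one]

end HomogeneousComponents

theorem homComp_eq_homogeneousComponent (N : ℕ) (f : MvPowerSeries σ ℚ) (k : ℕ) :
    homComp N f k = MvPowerSeries.homogeneousComponent (N * k) f := by
  ext d
  rw [MvPowerSeries.coeff_homogeneousComponent]
  rfl

theorem IsHomogDeg.isHomogeneous {N : ℕ} {a : MvPowerSeries σ ℚ} (ha : IsHomogDeg N a) :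
    a.IsHomogeneous N :=
  MvPowerSeries.isHomogeneous_iff_coeff_eq_zero.2 fun d hd => by
    by_contra h
    exact hd (ha.2 d h)

theorem coeff_sum_expQ_eq_alternant {n : ℕ} (u : Fin (n + 1) → MvPowerSeries σ ℚ) (e m : ℕ) :
    PowerSeries.coeff m (∑ i : Fin (n + 1),
      (-1 : PowerSeries (MvPowerSeries σ ℚ)) ^ (n + 1 - 1 - (i : ℕ)) *
        PowerSeries.C (u i ^ e *
          ∏ p ∈ univ.filter
              (fun p : Fin (n + 1) × Fin (n + 1) => p.1 < p.2 ∧ p.1 ≠ i ∧ p.2 ≠ i),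
            (u p.2 - u p.1)) * expQ (u i)) =
      (m.factorial : ℚ)⁻¹ • alternant u (e + m) := by
  rw [alternant, smul_sum, map_sum]
  refine sum_congr rfl fun i _ => ?_
  rw [Nat.add_sub_cancel, ← map_one PowerSeries.C, ← map_neg, ← map_pow, ← map_mul,
    PowerSeries.coeff_C_mul, expQ, PowerSeries.coeff_mk, mul_smul_comm, pow_add]
  congr 1
  ring

/-- Indices run over `Fin r`, so `i` stands for the paper's `i + 1` and its sign `(-1)^(r-i)`
becomes `(-1)^(r-1-i)`. -/
theorem Etrans_mul_prod_inv_one_sub_general {σ : Type*} (N : ℕ) (hN : 1 ≤ N)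
    (r : ℕ) (k : ℕ) (hk : k < r)
    (u : Fin r → MvPowerSeries σ ℚ) (a : Fin k → MvPowerSeries σ ℚ)
    (hu : ∀ i, IsHomogDeg N (u i)) (ha : ∀ i, IsHomogDeg N (a i)) :
    PowerSeries.C (R := MvPowerSeries σ ℚ)
        (∏ p ∈ Finset.univ.filter (fun p : Fin r × Fin r => p.1 < p.2), (u p.2 - u p.1)) *
      Etrans N ((∏ i, a i) * ∏ i, (1 - u i)⁻¹) =
    PowerSeries.C (R := MvPowerSeries σ ℚ) (∏ i, a i) *
      ∑ i : Fin r, (-1 : PowerSeries (MvPowerSeries σ ℚ)) ^ (r - 1 - (i : ℕ)) *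
        PowerSeries.C (R := MvPowerSeries σ ℚ)
          (u i ^ (r - k - 1) *
            ∏ p ∈ Finset.univ.filter
                (fun p : Fin r × Fin r => p.1 < p.2 ∧ p.1 ≠ i ∧ p.2 ≠ i),
              (u p.2 - u p.1)) *
        expQ (u i) := by
  obtain ⟨n, rfl⟩ : ∃ n, r = n + 1 := ⟨r - 1, by omega⟩
  have hu' (i) : (u i).IsHomogeneous N := (hu i).isHomogeneous
  have hA : (∏ i, a i).IsHomogeneous (∑ _i : Fin k, N) :=
    MvPowerSeries.IsHomogeneous.prod univ fun i _ => (ha i).isHomogeneous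
  rw [sum_const, card_univ, Fintype.card_fin, smul_eq_mul, mul_comm] at hA
  have hG : (∏ i, (1 - u i)) * ∏ i, (1 - u i)⁻¹ = 1 := by
    rw [← prod_mul_distrib]
    refine prod_eq_one fun i _ => MvPowerSeries.mul_inv_cancel _ ?_
    rw [map_sub, map_one, MvPowerSeries.IsHomogeneous.constantCoeff_eq_zero (hu' i) (by omega),
      sub_zero]
    exact one_ne_zero
  ext m : 1
  rw [PowerSeries.coeff_C_mul, PowerSeries.coeff_C_mul, coeff_sum_expQ_eq_alternant,
    alternant_eq_mul_homogeneousComponent hN hu' hG, Etrans, PowerSeries.coeff_mk,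
    homComp_eq_homogeneousComponent, hA.homogeneousComponent_mul_mul hN,
    show n + 1 - k - 1 + m - n = m - k by omega]
  by_cases hkm : k ≤ m
  · rw [if_pos hkm, if_pos (by omega), mul_smul_comm, mul_smul_comm, mul_left_comm]
  · rw [if_neg hkm, if_neg (by omega)]
    simp only [mul_zero, smul_zero]

/-- with denominators cleared,
`(∏_{p<q} (u_q - u_p)) · E(a_1⋯a_k ∏_i (1-u_i)⁻¹)
  = a_1⋯a_k Σ_i (-1)^{r-i} u_i^{r-k-1} exp(q·u_i) ∏_{p<q, p,q≠i} (u_q - u_p)`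
(indices `1,…,r`; here `i : Fin r` corresponds to `i+1`, so the sign is `(-1)^(r-1-i)`). -/
theorem Etrans_mul_prod_inv_one_sub {σ : Type*} (N : ℕ) (hN : 1 ≤ N)
    (r : ℕ) (hr : 1 ≤ r) (k : ℕ) (hk : k < r)
    (u : Fin r → MvPowerSeries σ ℚ) (a : Fin k → MvPowerSeries σ ℚ)
    (hu : ∀ i, IsHomogDeg N (u i)) (ha : ∀ i, IsHomogDeg N (a i))
    (huinj : Function.Injective u) :
    PowerSeries.C (R := MvPowerSeries σ ℚ)
        (∏ p ∈ Finset.univ.filter (fun p : Fin r × Fin r => p.1 < p.2), (u p.2 - u p.1)) *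
      Etrans N ((∏ i, a i) * ∏ i, (1 - u i)⁻¹) =
    PowerSeries.C (R := MvPowerSeries σ ℚ) (∏ i, a i) *
      ∑ i : Fin r, (-1 : PowerSeries (MvPowerSeries σ ℚ)) ^ (r - 1 - (i : ℕ)) *
        PowerSeries.C (R := MvPowerSeries σ ℚ)
          (u i ^ (r - k - 1) *
            ∏ p ∈ Finset.univ.filter
                (fun p : Fin r × Fin r => p.1 < p.2 ∧ p.1 ≠ i ∧ p.2 ≠ i),
              (u p.2 - u p.1)) *
        expQ (u i) :=
  Etrans_mul_prod_inv_one_sub_general N hN r k hk u a hu ha
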